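/- arXiv:2303.14296 — 4 statements merged into one kernel-verified Lean document; each statement's English description precedes it below -/
import Mathlib

section
/- For every natural number n, there exist n consecutive natural numbers none of which is an SP number; that is, there exists a natural number m ≥ 1 such that for every i < n, the number m + i is not an SP number. -/
/-- A natural number is an SP number if it is a prime times a square `k^2` with `k ≥ 2`. -/
def IsSP (n : ℕ) : Prop := ∃ p k : ℕ, p.Prime ∧ 2 ≤ k ∧ n = p * k ^ 2

/-- `Qset` consists of `1` together with all SP numbers. -/
def Qset : Set ℕ := {n | n = 1 ∨ IsSP n}

/-- `N x` is the smallest element of `Qset` strictly greater than `x`. -/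
noncomputable def N (x : ℕ) : ℕ := sInf {y : ℕ | y ∈ Qset ∧ x < y}

/-- The loop operation: `dot a b = N (|a - b|)`. -/
noncomputable def dot (a b : ℕ) : ℕ := N ((a : ℤ) - (b : ℤ)).natAbs

/-!
A number `x ≡ p q (mod p² q²)`, with `p ≠ q` primes, is divisible by `p` and by `q` but by neither
`p²` nor `q²`. Such an `x` is not of the form `r k²` with `r` prime: a prime dividing `r k²` to the
first power only must be `r`, so `p = r = q`. Taking a fresh pair of primes `pᵢ, qᵢ` for each
`i < n`, the Chinese remainder theorem gives `m` with `m + i ≡ pᵢ qᵢ (mod pᵢ² qᵢ²)` for all `i < n`.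
-/

open Nat Function

lemma Nat.Prime.eq_of_dvd_mul_sq_of_not_sq_dvd {p r k : ℕ} (hp : p.Prime) (hr : r.Prime)
    (hdvd : p ∣ r * k ^ 2) (hsq : ¬ p ^ 2 ∣ r * k ^ 2) : p = r := by
  rcases hp.dvd_mul.mp hdvd with hpr | hpk
  · exact (prime_dvd_prime_iff_eq hp hr).mp hpr
  · exact absurd (dvd_mul_of_dvd_right (pow_dvd_pow_of_dvd (hp.dvd_of_dvd_pow hpk) 2) r) hsq

lemma not_isSP_of_two_primes {x p q : ℕ} (hp : p.Prime) (hq : q.Prime) (hpq : p ≠ q)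
    (hpx : p ∣ x) (hqx : q ∣ x) (hp2 : ¬ p ^ 2 ∣ x) (hq2 : ¬ q ^ 2 ∣ x) : ¬ IsSP x := by
  rintro ⟨r, k, hr, -, rfl⟩
  exact hpq <| (hp.eq_of_dvd_mul_sq_of_not_sq_dvd hr hpx hp2).trans
    (hq.eq_of_dvd_mul_sq_of_not_sq_dvd hr hqx hq2).symm

lemma Nat.Prime.not_sq_dvd_mul {p q : ℕ} (hp : p.Prime) (hq : q.Prime) (hpq : p ≠ q) :
    ¬ p ^ 2 ∣ p * q := by
  rw [sq, Nat.mul_dvd_mul_iff_left hp.pos]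
  exact fun h => hpq ((prime_dvd_prime_iff_eq hp hq).mp h)

lemma not_isSP_of_modEq {x p q : ℕ} (hp : p.Prime) (hq : q.Prime) (hpq : p ≠ q)
    (hx : x ≡ p * q [MOD (p * q) ^ 2]) : ¬ IsSP x := by
  have hpq2 : p * q ∣ (p * q) ^ 2 := dvd_pow_self _ two_ne_zero
  refine not_isSP_of_two_primes hp hq hpq ?_ ?_ ?_ ?_
  · exact (hx.dvd_iff ((dvd_mul_right p q).trans hpq2)).mpr (dvd_mul_right p q)
  · exact (hx.dvd_iff ((dvd_mul_left q p).trans hpq2)).mpr (dvd_mul_left q p)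
  · rw [hx.dvd_iff (pow_dvd_pow_of_dvd (dvd_mul_right p q) 2)]
    exact hp.not_sq_dvd_mul hq hpq
  · rw [hx.dvd_iff (pow_dvd_pow_of_dvd (dvd_mul_left q p) 2), mul_comm]
    exact hq.not_sq_dvd_mul hp hpq.symm

lemma exists_add_modEq_of_pairwise_coprime (a s : ℕ → ℕ) (n : ℕ) (hs : ∀ i, s i ≠ 0)
    (hcop : Pairwise (Coprime on s)) : ∃ m, 1 ≤ m ∧ ∀ i < n, m + i ≡ a i [MOD s i] := by
  -- `a i + i * (s i - 1)` stands for `a i - i` modulo `s i`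
  obtain ⟨k, hk⟩ := chineseRemainderOfFinset (fun i => a i + i * (s i - 1)) s (Finset.range n)
    (fun i _ => hs i) (fun i _ j _ hij => hcop hij)
  have hprod : 0 < ∏ i ∈ Finset.range n, s i := Finset.prod_pos fun i _ => pos_of_ne_zero (hs i)
  refine ⟨k + ∏ i ∈ Finset.range n, s i, by omega, fun i hi => ?_⟩
  have hsi : s i ∣ ∏ i ∈ Finset.range n, s i := Finset.dvd_prod_of_mem s (Finset.mem_range.mpr hi)
  calc k + ∏ i ∈ Finset.range n, s i + i
      ≡ k + i [MOD s i] := (add_modEq_left_iff.mpr hsi).add_right i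
    _ ≡ a i + i * (s i - 1) + i [MOD s i] := (hk i (Finset.mem_range.mpr hi)).add_right i
    _ = a i + s i * i := by rw [add_assoc, ← Nat.mul_add_one, Nat.sub_one_add_one (hs i), mul_comm]
    _ ≡ a i [MOD s i] := add_modEq_left_iff.mpr (dvd_mul_right _ _)

lemma Nat.nth_prime_injective : Injective (nth Nat.Prime) :=
  nth_injective infinite_setOfPred_prime

lemma Nat.coprime_nth_prime {a b : ℕ} (hab : a ≠ b) : Coprime (nth Nat.Prime a) (nth Nat.Prime b) :=
  (coprime_primes (prime_nth_prime a) (prime_nth_prime b)).mpr (nth_prime_injective.ne hab)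

theorem sp_arbitrary_gaps (n : ℕ) :
    ∃ m : ℕ, 1 ≤ m ∧ ∀ i < n, ¬ IsSP (m + i) := by
  obtain ⟨m, hm, hmod⟩ := exists_add_modEq_of_pairwise_coprime
    (fun i => nth Nat.Prime (2 * i) * nth Nat.Prime (2 * i + 1))
    (fun i => (nth Nat.Prime (2 * i) * nth Nat.Prime (2 * i + 1)) ^ 2) n
    (fun i => pow_ne_zero 2 (mul_ne_zero (prime_nth_prime _).ne_zero (prime_nth_prime _).ne_zero))
    (fun i j hij => Coprime.pow 2 2 <| Coprime.mul_left
      (Coprime.mul_right (coprime_nth_prime (by omega)) (coprime_nth_prime (by omega)))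
      (Coprime.mul_right (coprime_nth_prime (by omega)) (coprime_nth_prime (by omega))))
  exact ⟨m, hm, fun i hi => not_isSP_of_modEq (prime_nth_prime _) (prime_nth_prime _)
    (nth_prime_injective.ne (by omega)) (hmod i hi)⟩
end

section
/- For every q ∈ Q there exists a ∈ Q such that a • q = a; equivalently, there exists a ∈ Q with a > q such that the smallest element of Q strictly greater than a − q is a itself. -/
/-!
`a ∈ Q` satisfies `a • q = a` as soon as `Q` has no element strictly between `a - q` and `a`.
Such an `a` exists because `Q` has arbitrarily long gaps: a number divisible exactly once by each
of two distinct primes is neither `1` nor of the form `p k²`, and the Chinese remainder theorem,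
applied with two fresh primes for each of `n + 1, …, n + q`, produces a gap `(n, n + q]`.
Then `a := N (n + q)` works.
-/

lemma prime_eq_of_dvd_of_not_sq_dvd {p k r : ℕ} (hp : p.Prime) (hr : r.Prime)
    (hdvd : r ∣ p * k ^ 2) (hndvd : ¬ r ^ 2 ∣ p * k ^ 2) : r = p := by
  rcases hr.dvd_mul.mp hdvd with h | h
  · exact (Nat.prime_dvd_prime_iff_eq hr hp).mp h
  · exact absurd ((pow_dvd_pow_of_dvd (hr.dvd_of_dvd_pow h) 2).mul_left p) hndvd

lemma notMem_Qset_of_two_primes {n r₁ r₂ : ℕ} (h₁ : r₁.Prime) (h₂ : r₂.Prime) (hne : r₁ ≠ r₂)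
    (hd₁ : r₁ ∣ n) (hnd₁ : ¬ r₁ ^ 2 ∣ n) (hd₂ : r₂ ∣ n) (hnd₂ : ¬ r₂ ^ 2 ∣ n) : n ∉ Qset := by
  rintro (rfl | ⟨p, k, hp, -, rfl⟩)
  · exact h₁.one_lt.ne' (Nat.dvd_one.mp hd₁)
  · exact hne ((prime_eq_of_dvd_of_not_sq_dvd hp h₁ hd₁ hnd₁).trans
      (prime_eq_of_dvd_of_not_sq_dvd hp h₂ hd₂ hnd₂).symm)

lemma pos_of_mem_Qset {n : ℕ} (hn : n ∈ Qset) : 0 < n := by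
  rcases hn with rfl | ⟨p, k, hp, hk, rfl⟩
  · exact one_pos
  · exact Nat.mul_pos hp.pos (pow_pos (by omega) 2)

lemma dvd_and_not_sq_dvd_of_modEq {p m : ℕ} (hp : 1 < p) (h : m ≡ p [MOD p ^ 2]) :
    p ∣ m ∧ ¬ p ^ 2 ∣ m := by
  refine ⟨(h.dvd_iff (dvd_pow_self p two_ne_zero)).mpr dvd_rfl, fun hsq => ?_⟩
  have hle : p ^ 2 ≤ p := Nat.le_of_dvd (by omega) ((h.dvd_iff dvd_rfl).mp hsq)
  nlinarith

lemma exists_add_modEq_nth_prime (c : ℕ → ℕ) (m : ℕ) :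
    ∃ n, ∀ j < m, n + c j ≡ Nat.nth Nat.Prime j [MOD Nat.nth Nat.Prime j ^ 2] := by
  set P := Nat.nth Nat.Prime
  have hcoprime :
      Set.Pairwise (Finset.range m : Set ℕ) (Function.onFun Nat.Coprime fun j => P j ^ 2) :=
    fun i _ j _ hij => Nat.Coprime.pow 2 2 ((Nat.coprime_primes (Nat.prime_nth_prime i)
      (Nat.prime_nth_prime j)).mpr ((Nat.nth_injective Nat.infinite_setOfPred_prime).ne hij))
  -- the residue `P j + P j ^ 2 * c j - c j` avoids truncated subtraction
  obtain ⟨n, hn⟩ := Nat.chineseRemainderOfFinset (fun j => P j + P j ^ 2 * c j - c j)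
    (fun j => P j ^ 2) (Finset.range m)
    (fun j _ => pow_ne_zero 2 (Nat.prime_nth_prime j).ne_zero) hcoprime
  refine ⟨n, fun j hj => ?_⟩
  have hc : c j ≤ P j + P j ^ 2 * c j :=
    le_add_left (Nat.le_mul_of_pos_left _ (pow_pos (Nat.prime_nth_prime j).pos 2))
  calc n + c j ≡ P j + P j ^ 2 * c j - c j + c j [MOD P j ^ 2] :=
        (hn j (Finset.mem_range.mpr hj)).add_right _
    _ = P j + P j ^ 2 * c j := Nat.sub_add_cancel hc
    _ ≡ P j [MOD P j ^ 2] := by simp [Nat.ModEq]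

lemma exists_Qset_gap (q : ℕ) : ∃ n, ∀ m, n < m → m ≤ n + q → m ∉ Qset := by
  obtain ⟨n, hn⟩ := exists_add_modEq_nth_prime (fun j => j / 2 + 1) (2 * q)
  refine ⟨n, fun m hnm hmq => ?_⟩
  obtain ⟨i, rfl⟩ : ∃ i, m = n + i + 1 := ⟨m - n - 1, by omega⟩
  have hodd : n + ((2 * i + 1) / 2 + 1) = n + i + 1 := by omega
  have heven : n + (2 * i / 2 + 1) = n + i + 1 := by omega
  have h₁ := dvd_and_not_sq_dvd_of_modEq (Nat.prime_nth_prime _).one_lt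
    (heven ▸ hn (2 * i) (by omega))
  have h₂ := dvd_and_not_sq_dvd_of_modEq (Nat.prime_nth_prime _).one_lt
    (hodd ▸ hn (2 * i + 1) (by omega))
  exact notMem_Qset_of_two_primes (Nat.prime_nth_prime _) (Nat.prime_nth_prime _)
    ((Nat.nth_injective Nat.infinite_setOfPred_prime).ne (by omega)) h₁.1 h₁.2 h₂.1 h₂.2

lemma exists_mem_Qset_gt (x : ℕ) : ∃ y ∈ Qset, x < y := by
  obtain ⟨p, hxp, hp⟩ := Nat.exists_infinite_primes (x + 1)
  exact ⟨2 * p ^ 2, Or.inr ⟨2, p, Nat.prime_two, hp.two_le, rfl⟩, by nlinarith⟩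

lemma N_mem_Qset_and_lt (x : ℕ) : N x ∈ Qset ∧ x < N x :=
  Nat.sInf_mem (exists_mem_Qset_gt x)

lemma N_le {x y : ℕ} (hy : y ∈ Qset) (hxy : x < y) : N x ≤ y :=
  Nat.sInf_le ⟨hy, hxy⟩

lemma notMem_Qset_of_lt_N {x y : ℕ} (hxy : x < y) (hy : y < N x) : y ∉ Qset :=
  fun hyQ => Nat.notMem_of_lt_sInf hy ⟨hyQ, hxy⟩

lemma N_eq_of_forall_notMem {x a : ℕ} (ha : a ∈ Qset) (hxa : x < a)
    (hgap : ∀ m, x < m → m < a → m ∉ Qset) : N x = a := by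
  obtain ⟨hNQ, hxN⟩ := N_mem_Qset_and_lt x
  exact le_antisymm (N_le ha hxa) (not_lt.mp fun hlt => hgap _ hxN hlt hNQ)

theorem exists_fixed_point (q : ℕ) (hq : q ∈ Qset) :
    ∃ a ∈ Qset, q < a ∧ dot a q = a := by
  obtain ⟨n, hn⟩ := exists_Qset_gap q
  obtain ⟨haQ, hlt⟩ := N_mem_Qset_and_lt (n + q)
  have hq0 := pos_of_mem_Qset hq
  refine ⟨N (n + q), haQ, by omega, ?_⟩
  rw [dot, show ((N (n + q) : ℤ) - q).natAbs = N (n + q) - q by omega]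
  refine N_eq_of_forall_notMem haQ (by omega) fun m hm₁ hm₂ => ?_
  rcases le_or_gt m (n + q) with hmq | hmq
  · exact hn m (by omega) hmq
  · exact notMem_Qset_of_lt_N hmq hm₂
end

section
/- For every natural number n ≥ 4, there exists an SP number s with n < s ≤ 2n. -/
theorem sp_bertrand (n : ℕ) (hn : 4 ≤ n) :
    ∃ s : ℕ, IsSP s ∧ n < s ∧ s ≤ 2 * n := by
  -- The witness is `p * 2 ^ 2` for a Bertrand prime `n / 4 < p ≤ 2 * (n / 4)`.
  obtain ⟨p, hp, hlt, hle⟩ := Nat.exists_prime_lt_and_le_two_mul (n / 4) (by omega)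
  exact ⟨p * 2 ^ 2, ⟨p, 2, hp, le_rfl, rfl⟩, by omega, by omega⟩
end

section
/- The operation • on Q is not associative: there exist elements a, b, c ∈ Q such that (a • b) • c ≠ a • (b • c). -/
/-
The elements of `Qset` begin `1, 8, 12, 18, …`, so `N` is `1` at `0`, `8` on `[1, 8)` and `12` on
`[8, 12)`. With `a, b, c = 8, 12, 18` this gives `(8 • 12) • 18 = N 4 • 18 = 8 • 18 = N 10 = 12`,
while `8 • (12 • 18) = 8 • N 6 = 8 • 8 = N 0 = 1`.
-/

theorem mem_Qset_of_prime_mul_sq {p k : ℕ} (hp : p.Prime) (hk : 2 ≤ k) : p * k ^ 2 ∈ Qset :=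
  Or.inr ⟨p, k, hp, hk, rfl⟩

theorem IsSP.eq_eight_of_lt_twelve {n : ℕ} (hn : IsSP n) (h12 : n < 12) : n = 8 := by
  obtain ⟨p, k, hp, hk, rfl⟩ := hn
  have hk2 : 4 ≤ k ^ 2 := by nlinarith
  obtain rfl : p = 2 := by
    by_contra hne
    have hp3 : 3 ≤ p := by have := hp.two_le; omega
    nlinarith
  obtain rfl : k = 2 := by nlinarith
  rfl

theorem eq_one_or_eight_of_mem_Qset_of_lt_twelve {n : ℕ} (hn : n ∈ Qset) (h12 : n < 12) :
    n = 1 ∨ n = 8 :=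
  hn.imp_right fun h => h.eq_eight_of_lt_twelve h12

theorem N_eq_of_isLeast {x v : ℕ} (h : IsLeast {y | y ∈ Qset ∧ x < y} v) : N x = v :=
  h.csInf_eq

theorem N_zero : N 0 = 1 :=
  N_eq_of_isLeast ⟨⟨Or.inl rfl, one_pos⟩, fun _ hy => hy.2⟩

theorem N_eq_eight {x : ℕ} (hx : 1 ≤ x) (hx8 : x < 8) : N x = 8 := by
  refine N_eq_of_isLeast ⟨⟨mem_Qset_of_prime_mul_sq Nat.prime_two le_rfl, hx8⟩, ?_⟩
  rintro y ⟨hyQ, hxy⟩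
  by_contra! hy8
  rcases eq_one_or_eight_of_mem_Qset_of_lt_twelve hyQ (by omega) with rfl | rfl <;> omega

theorem N_eq_twelve {x : ℕ} (hx : 8 ≤ x) (hx12 : x < 12) : N x = 12 := by
  refine N_eq_of_isLeast ⟨⟨mem_Qset_of_prime_mul_sq Nat.prime_three le_rfl, hx12⟩, ?_⟩
  rintro y ⟨hyQ, hxy⟩
  by_contra! hy12
  rcases eq_one_or_eight_of_mem_Qset_of_lt_twelve hyQ hy12 with rfl | rfl <;> omega

theorem dot_not_associative :
    ∃ a b c : ℕ, a ∈ Qset ∧ b ∈ Qset ∧ c ∈ Qset ∧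
      dot (dot a b) c ≠ dot a (dot b c) := by
  refine ⟨8, 12, 18, mem_Qset_of_prime_mul_sq Nat.prime_two le_rfl,
    mem_Qset_of_prime_mul_sq Nat.prime_three le_rfl,
    mem_Qset_of_prime_mul_sq (k := 3) Nat.prime_two (by norm_num), ?_⟩
  have h8_12 : dot 8 12 = 8 := N_eq_eight (by norm_num) (by norm_num)
  have h12_18 : dot 12 18 = 8 := N_eq_eight (by norm_num) (by norm_num)
  have h8_18 : dot 8 18 = 12 := N_eq_twelve (by norm_num) (by norm_num)
  have h8_8 : dot 8 8 = 1 := N_zero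
  rw [h8_12, h12_18, h8_18, h8_8]
  norm_num
end
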